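/- Let G = (V,E) be a directed graph, let C, D, H ⊆ V, and let h ≥ 1 be an integer. Let Π' = (π'_{s,t}) be a family containing, for some pairs (s,t), a path π'_{s,t} from s to t in G with at most h edges (with |π'_{s,t}| := ∞ when undefined), such that: (i) for all s,t ∈ V for which every walk from s to t in G of length δ_G^h(s,t) avoids all vertices of C ∪ D (in particular whenever δ_G^h(s,t) = ∞), |π'_{s,t}| = δ_G^h(s,t); and (ii) every defined π'_{s,t} with |π'_{s,t}| = h contains a vertex of H. Then for all s ∈ V ∖ (C ∪ D ∪ H) and t ∈ V with δ_G(s,t) < ∞, there is a walk from s to t in G of length exactly δ_G(s,t) that either (a) equals π'_{s,t}, or (b) has a prefix of positive length which is either π'_{s,r} for some r ∈ C ∪ D ∪ H, or π'_{s,q} followed by an edge (q,r) ∈ E for some q ∈ V and r ∈ C ∪ D ∪ H. -/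

import Mathlib

/-!
Let `k = δ_G(s,t)` and call a step `j ∈ [1, min k h]` *bad* if some shortest `s`–`t` walk visits
`C ∪ D` at step `j`. A prefix of a shortest walk is shortest, and it can be exchanged for any other
shortest walk to the same vertex. Hence, if no step up to `a` is bad, every shortest walk from `s`
to the `a`-th vertex avoids `C ∪ D` (as `s` does), so by (i) the path `π'` to that vertex has
length `a` and can be spliced into the walk. If some step is bad, splicing at the step before the
first bad one gives (b) with an edge into `C ∪ D`. Otherwise splice at `min k h`: for `k < h` this
is (a); else by (ii) the spliced path meets `H` at a step `i ≥ 1`, and splicing again at `i` gives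
(b) with `r ∈ H`.
-/

open scoped Classical

namespace Paper

variable {V : Type*}

/-- `p` (restricted to indices `0,…,k`) is a walk of length `k` w.r.t. the edge relation `E`. -/
def IsWalk (E : V → V → Prop) (k : ℕ) (p : ℕ → V) : Prop :=
  ∀ i, i < k → E (p i) (p (i + 1))

/-- The distance `δ_G(s,t)`. -/
noncomputable def gdist (E : V → V → Prop) (s t : V) : ℕ∞ :=
  ⨅ (k : ℕ) (_ : ∃ p : ℕ → V, p 0 = s ∧ p k = t ∧ IsWalk E k p), (k : ℕ∞)

/-- The `h`-bounded distance `δ_G^h(s,t)`. -/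
noncomputable def bdist (E : V → V → Prop) (h : ℕ) (s t : V) : ℕ∞ :=
  ⨅ (k : ℕ) (_ : k ≤ h ∧ ∃ p : ℕ → V, p 0 = s ∧ p k = t ∧ IsWalk E k p), (k : ℕ∞)

/-- A (simple) path in the graph `E`. -/
structure Path (E : V → V → Prop) where
  len : ℕ
  vtx : ℕ → V
  isWalk : IsWalk E len vtx
  inj : ∀ i ≤ len, ∀ j ≤ len, vtx i = vtx j → i = j

/-- The length of an optional path, `⊤` if undefined. -/
def plen {E : V → V → Prop} : Option (Path E) → ℕ∞
  | none => ⊤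
  | some p => (p.len : ℕ∞)

variable {E : V → V → Prop}

theorem IsWalk.mono {k m : ℕ} {p : ℕ → V} (hw : IsWalk E k p) (hm : m ≤ k) : IsWalk E m p :=
  fun i hi => hw i (hi.trans_le hm)

theorem IsWalk.drop {k : ℕ} {p : ℕ → V} (hw : IsWalk E k p) (i : ℕ) :
    IsWalk E (k - i) fun j => p (i + j) :=
  fun j hj => by simpa only [Nat.add_assoc] using hw (i + j) (by omega)

theorem IsWalk.append {a b : ℕ} {p q : ℕ → V} (hp : IsWalk E a p) (hq : IsWalk E b q)
    (hpq : p a = q 0) : IsWalk E (a + b) fun j => if j ≤ a then p j else q (j - a) := by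
  intro j hj
  dsimp only
  rcases lt_trichotomy j a with hja | rfl | hja
  · simpa only [if_pos hja.le, if_pos (Nat.succ_le_of_lt hja)] using hp j hja
  · simpa only [le_refl, if_true, Nat.lt_irrefl, if_false, hpq, Nat.add_sub_cancel_left,
      Nat.sub_self, Nat.not_succ_le_self] using hq 0 (by omega)
  · rw [if_neg (by omega), if_neg (by omega), show j + 1 - a = j - a + 1 by omega]
    exact hq (j - a) (by omega)

theorem gdist_le_of_isWalk {s t : V} {k : ℕ} {p : ℕ → V} (h0 : p 0 = s) (hk : p k = t)
    (hw : IsWalk E k p) : gdist E s t ≤ k :=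
  iInf₂_le k ⟨p, h0, hk, hw⟩

theorem gdist_le_bdist (h : ℕ) (s t : V) : gdist E s t ≤ bdist E h s t :=
  le_iInf₂ fun _ ⟨_, _, h0, hk, hw⟩ => gdist_le_of_isWalk h0 hk hw

def IsShortestWalk (E : V → V → Prop) (s t : V) (k : ℕ) (w : ℕ → V) : Prop :=
  w 0 = s ∧ w k = t ∧ IsWalk E k w ∧ (k : ℕ∞) = gdist E s t

theorem exists_isShortestWalk {s t : V} (hne : gdist E s t ≠ ⊤) :
    ∃ k w, IsShortestWalk E s t k w := by
  have hreach : ∃ k, ∃ p : ℕ → V, p 0 = s ∧ p k = t ∧ IsWalk E k p := by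
    by_contra hnone
    exact hne (iInf₂_eq_top.2 fun k hk => absurd ⟨k, hk⟩ hnone)
  obtain ⟨p, h0, hk, hw⟩ := Nat.find_spec hreach
  refine ⟨Nat.find hreach, p, h0, hk, hw, le_antisymm ?_ (gdist_le_of_isWalk h0 hk hw)⟩
  exact le_iInf₂ fun k hk => by exact_mod_cast Nat.find_min' hreach hk

theorem exists_isShortestWalk_of_gdist_eq {s t : V} {m : ℕ} (hm : (m : ℕ∞) = gdist E s t) :
    ∃ w, IsShortestWalk E s t m w := by
  obtain ⟨k, w, hw⟩ := exists_isShortestWalk (hm ▸ ENat.natCast_ne_top m)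
  obtain rfl : k = m := by exact_mod_cast hw.2.2.2.trans hm.symm
  exact ⟨w, hw⟩

theorem gdist_triangle (s u t : V) : gdist E s t ≤ gdist E s u + gdist E u t := by
  rcases eq_or_ne (gdist E s u) ⊤ with hsu | hsu
  · simp [hsu]
  rcases eq_or_ne (gdist E u t) ⊤ with hut | hut
  · simp [hut]
  obtain ⟨a, p, hp0, hpa, hp, hpg⟩ := exists_isShortestWalk hsu
  obtain ⟨b, q, hq0, hqb, hq, hqg⟩ := exists_isShortestWalk hut
  rw [← hpg, ← hqg, ← Nat.cast_add]
  refine gdist_le_of_isWalk ?_ ?_ (hp.append hq (hpa.trans hq0.symm))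
  · simp [hp0]
  · split_ifs with hab
    · obtain rfl : b = 0 := by omega
      rw [Nat.add_zero, hpa, ← hq0, hqb]
    · rw [Nat.add_sub_cancel_left, hqb]

theorem IsShortestWalk.take {s t : V} {k i : ℕ} {w : ℕ → V} (hw : IsShortestWalk E s t k w)
    (hi : i ≤ k) : IsShortestWalk E s (w i) i w := by
  obtain ⟨h0, hk, hwalk, hg⟩ := hw
  refine ⟨h0, rfl, hwalk.mono hi, le_antisymm ?_ (gdist_le_of_isWalk h0 rfl (hwalk.mono hi))⟩
  have hrest : gdist E (w i) t ≤ (k - i : ℕ) :=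
    gdist_le_of_isWalk rfl (by simp [hi, hk]) (hwalk.drop i)
  have htri : (k : ℕ∞) ≤ gdist E s (w i) + (k - i : ℕ) :=
    hg ▸ (gdist_triangle s (w i) t).trans (by gcongr)
  rcases eq_or_ne (gdist E s (w i)) ⊤ with htop | hne
  · exact htop ▸ le_top
  obtain ⟨n, hn⟩ := ENat.ne_top_iff_exists.1 hne
  rw [← hn] at htri ⊢
  norm_cast at htri ⊢
  omega

def replacePrefix (q w : ℕ → V) (a : ℕ) : ℕ → V := fun j => if j ≤ a then q j else w j

section replacePrefix

variable {q w : ℕ → V} {a j : ℕ}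

theorem replacePrefix_of_le (hj : j ≤ a) : replacePrefix q w a j = q j := if_pos hj

theorem replacePrefix_of_ge (hqa : q a = w a) (hj : a ≤ j) : replacePrefix q w a j = w j := by
  unfold replacePrefix
  split_ifs with hja
  · rw [show j = a by omega, hqa]
  · rfl

theorem isWalk_replacePrefix {k : ℕ} (hq : IsWalk E a q) (hw : IsWalk E k w) (hqa : q a = w a) :
    IsWalk E k (replacePrefix q w a) := by
  intro j hj
  rcases lt_or_ge j a with hja | hja
  · rw [replacePrefix_of_le hja.le, replacePrefix_of_le hja]
    exact hq j hja
  · rw [replacePrefix_of_ge hqa hja, replacePrefix_of_ge hqa (by omega)]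
    exact hw j hj

theorem isShortestWalk_replacePrefix {s t : V} {k : ℕ} (hw : IsShortestWalk E s t k w)
    (hq : IsWalk E a q) (hq0 : q 0 = s) (hqa : q a = w a) (hak : a ≤ k) :
    IsShortestWalk E s t k (replacePrefix q w a) :=
  ⟨(replacePrefix_of_le a.zero_le).trans hq0, (replacePrefix_of_ge hqa hak).trans hw.2.1,
    isWalk_replacePrefix hq hw.2.2.1 hqa, hw.2.2.2⟩

end replacePrefix

def ShortestWalksAvoid (E : V → V → Prop) (B : Set V) (s t : V) (k a : ℕ) : Prop :=
  ∀ w, IsShortestWalk E s t k w → ∀ j, 1 ≤ j → j ≤ a → w j ∉ B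

section ShortestWalksAvoid

variable {B : Set V} {s t : V} {k a : ℕ}

theorem ShortestWalksAvoid.mono {b : ℕ} (h : ShortestWalksAvoid E B s t k a) (hba : b ≤ a) :
    ShortestWalksAvoid E B s t k b :=
  fun w hw j hj1 hjb => h w hw j hj1 (hjb.trans hba)

theorem ShortestWalksAvoid.forall_notMem {w q : ℕ → V} (h : ShortestWalksAvoid E B s t k a)
    (hw : IsShortestWalk E s t k w) (hak : a ≤ k) (hsB : s ∉ B)
    (hq : IsShortestWalk E s (w a) a q) :
    ∀ i ≤ a, q i ∉ B := by
  intro i hia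
  rcases Nat.eq_zero_or_pos i with rfl | hi
  · exact hq.1 ▸ hsB
  have hw' := isShortestWalk_replacePrefix hw hq.2.2.1 hq.1 hq.2.1 hak
  simpa only [replacePrefix_of_le hia] using h _ hw' i hi hia

theorem exists_first_visit (h : ¬ ShortestWalksAvoid E B s t k a) :
    ∃ b < a, ShortestWalksAvoid E B s t k b ∧ ∃ w, IsShortestWalk E s t k w ∧ w (b + 1) ∈ B := by
  have hex : ∃ j, ¬ ShortestWalksAvoid E B s t k j := ⟨a, h⟩
  have hfirst := Nat.find_spec hex
  obtain ⟨b, hb⟩ : ∃ b, Nat.find hex = b + 1 := by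
    refine Nat.exists_eq_add_one_of_ne_zero fun h0 => hfirst ?_
    rw [h0]
    exact fun _ _ j hj1 hj0 => absurd (hj1.trans hj0) (by omega)
  have hprev : ShortestWalksAvoid E B s t k b := not_not.1 (Nat.find_min hex (by omega))
  refine ⟨b, by have := Nat.find_min' hex h; omega, hprev, ?_⟩
  rw [hb] at hfirst
  simp only [ShortestWalksAvoid, not_forall, not_not] at hfirst
  obtain ⟨w, hw, j, hj1, hjb, hjB⟩ := hfirst
  obtain rfl : j = b + 1 := by
    by_contra hne
    exact hprev w hw j hj1 (by omega) hjB
  exact ⟨w, hw, hjB⟩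

end ShortestWalksAvoid

theorem bdist_eq_of_gdist_eq {h m : ℕ} {s q : V} (hmh : m ≤ h) (hm : (m : ℕ∞) = gdist E s q) :
    bdist E h s q = m := by
  obtain ⟨w, h0, hwm, hw, -⟩ := exists_isShortestWalk_of_gdist_eq hm
  exact le_antisymm (iInf₂_le m ⟨hmh, w, h0, hwm, hw⟩) (hm ▸ gdist_le_bdist h s q)

section PathFamily

variable {C D : Set V} {h : ℕ} {π' : V → V → Option (Path E)} {s t : V}

theorem exists_path_of_forall_notMem {m : ℕ} {q : V}
    (hi : (∀ (k : ℕ) (wv : ℕ → V), wv 0 = s → wv k = q → IsWalk E k wv →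
        (k : ℕ∞) = bdist E h s q → ∀ i ≤ k, wv i ∉ C ∧ wv i ∉ D) →
      plen (π' s q) = bdist E h s q)
    (hmh : m ≤ h) (hm : (m : ℕ∞) = gdist E s q)
    (havoid : ∀ w, IsShortestWalk E s q m w → ∀ i ≤ m, w i ∉ C ∪ D) :
    ∃ p, π' s q = some p ∧ p.len = m := by
  have hb := bdist_eq_of_gdist_eq hmh hm
  have hlen : plen (π' s q) = m := by
    rw [← hb]
    refine hi fun k wv h0 hk hw hkb i hik => ?_
    obtain rfl : k = m := by exact_mod_cast hkb.trans hb
    exact not_or.1 (havoid wv ⟨h0, hk, hw, hm⟩ i hik)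
  cases hπ : π' s q with
  | none => simp [hπ, plen] at hlen
  | some p => exact ⟨p, rfl, by simpa [hπ, plen] using hlen⟩

theorem IsShortestWalk.exists_path_prefix {w : ℕ → V} {k a : ℕ}
    (hends : ∀ q p, π' s q = some p → p.vtx 0 = s ∧ p.vtx p.len = q)
    (hi : ∀ q, (∀ (k : ℕ) (wv : ℕ → V), wv 0 = s → wv k = q → IsWalk E k wv →
        (k : ℕ∞) = bdist E h s q → ∀ i ≤ k, wv i ∉ C ∧ wv i ∉ D) →
      plen (π' s q) = bdist E h s q)
    (hw : IsShortestWalk E s t k w) (hak : a ≤ k) (hah : a ≤ h) (hsB : s ∉ C ∪ D)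
    (havoid : ShortestWalksAvoid E (C ∪ D) s t k a) :
    ∃ p W, π' s (w a) = some p ∧ p.len = a ∧ IsShortestWalk E s t k W ∧
      (∀ j ≤ a, W j = p.vtx j) ∧ ∀ j, a ≤ j → W j = w j := by
  obtain ⟨p, hp, hplen⟩ := exists_path_of_forall_notMem (hi (w a)) hah (hw.take hak).2.2.2
    fun q hq => havoid.forall_notMem hw hak hsB hq
  obtain ⟨hp0, hpa⟩ := hends _ p hp
  rw [hplen] at hpa
  exact ⟨p, _, hp, hplen, isShortestWalk_replacePrefix hw (hplen ▸ p.isWalk) hp0 hpa hak,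
    fun j => replacePrefix_of_le, fun j => replacePrefix_of_ge hpa⟩

end PathFamily

theorem prefix_decomposition_general {V : Type*} (E : V → V → Prop)
    (C D H : Set V) (h : ℕ)
    (π' : V → V → Option (Path E))
    (hπ' : ∀ s t : V, ∀ p, π' s t = some p →
      p.vtx 0 = s ∧ p.vtx p.len = t ∧ p.len ≤ h)
    (hi : ∀ s t : V,
      (∀ (k : ℕ) (wv : ℕ → V), wv 0 = s → wv k = t → IsWalk E k wv →
        (k : ℕ∞) = bdist E h s t → ∀ i ≤ k, wv i ∉ C ∧ wv i ∉ D) →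
      plen (π' s t) = bdist E h s t)
    (hii : ∀ s t : V, ∀ p, π' s t = some p → p.len = h → ∃ i ≤ p.len, p.vtx i ∈ H) :
    ∀ s t : V, s ∉ C → s ∉ D → s ∉ H → gdist E s t ≠ ⊤ →
      ∃ (k : ℕ) (wv : ℕ → V), wv 0 = s ∧ wv k = t ∧ IsWalk E k wv ∧
        (k : ℕ∞) = gdist E s t ∧
        ((∃ p, π' s t = some p ∧ p.len = k ∧ ∀ i ≤ k, wv i = p.vtx i) ∨
         (∃ m, 1 ≤ m ∧ m ≤ k ∧
           ((∃ r, (r ∈ C ∨ r ∈ D ∨ r ∈ H) ∧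
              ∃ p, π' s r = some p ∧ p.len = m ∧ ∀ i ≤ m, wv i = p.vtx i) ∨
            (∃ qv r, (r ∈ C ∨ r ∈ D ∨ r ∈ H) ∧ E qv r ∧
              ∃ p, π' s qv = some p ∧ p.len + 1 = m ∧
                (∀ i ≤ p.len, wv i = p.vtx i) ∧ wv m = r)))) := by
  intro s t hsC hsD hsH hne
  have hsB : s ∉ C ∪ D := not_or.2 ⟨hsC, hsD⟩
  have hends : ∀ q p, π' s q = some p → p.vtx 0 = s ∧ p.vtx p.len = q :=
    fun q p hp => (hπ' s q p hp).imp_right And.left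
  obtain ⟨k, w, hw⟩ := exists_isShortestWalk hne
  by_cases havoid : ShortestWalksAvoid E (C ∪ D) s t k (min k h)
  · obtain ⟨p, W, hp, hplen, hW, hWp, -⟩ := hw.exists_path_prefix hends (hi s)
      (min_le_left k h) (min_le_right k h) hsB havoid
    rcases lt_or_ge k h with hkh | hhk
    · rw [min_eq_left hkh.le, hw.2.1] at hp
      exact ⟨k, W, hW.1, hW.2.1, hW.2.2.1, hW.2.2.2,
        Or.inl ⟨p, hp, by omega, fun i hik => hWp i (by omega)⟩⟩
    obtain ⟨i, hip, hiH⟩ := hii s _ p hp (by omega)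
    rw [← hWp i (by omega)] at hiH
    have hi1 : 1 ≤ i := Nat.pos_of_ne_zero (by rintro rfl; exact hsH (hW.1 ▸ hiH))
    obtain ⟨p', W', hp', hp'len, hW', hW'p', -⟩ := hW.exists_path_prefix (a := i) hends (hi s)
      (by omega) (by omega) hsB (havoid.mono (by omega))
    exact ⟨k, W', hW'.1, hW'.2.1, hW'.2.2.1, hW'.2.2.2, Or.inr ⟨i, hi1, by omega,
      Or.inl ⟨W i, Or.inr (Or.inr hiH), p', hp', hp'len, hW'p'⟩⟩⟩
  · obtain ⟨a, hak, havoid', w', hw', ha⟩ := exists_first_visit havoid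
    obtain ⟨p, W, hp, hplen, hW, hWp, hWw'⟩ := hw'.exists_path_prefix hends (hi s)
      (by omega) (by omega) hsB havoid'
    exact ⟨k, W, hW.1, hW.2.1, hW.2.2.1, hW.2.2.2, Or.inr ⟨a + 1, by omega, by omega,
      Or.inr ⟨w' a, w' (a + 1), ha.imp_right Or.inl, hw'.2.2.1 a (by omega), p, hp, by omega,
      fun i hi => hWp i (by omega), hWw' _ (by omega)⟩⟩⟩

/-- **Lemma 6.2 (shortest-path prefix decomposition).** Assume `Π'` consists of paths of `G`
with at most `h` edges such that (i) `|π'_{s,t}| = δ_G^h(s,t)` whenever every walk `s → t` in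
`G` of length `δ_G^h(s,t)` avoids `C ∪ D`, and (ii) every defined `π'_{s,t}` with exactly `h`
edges contains a vertex of `H`.  Then for every `s ∉ C ∪ D ∪ H` and every `t` reachable from
`s`, some shortest walk `s → t` in `G` either (a) equals `π'_{s,t}` or (b) has a prefix of
positive length that is `π'_{s,r}` with `r ∈ C ∪ D ∪ H`, or `π'_{s,q}` followed by an edge
`(q,r)` with `r ∈ C ∪ D ∪ H`. -/
theorem prefix_decomposition {V : Type*} (E : V → V → Prop)
    (C D H : Set V) (h : ℕ) (hh : 1 ≤ h)
    (π' : V → V → Option (Path E))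
    (hπ' : ∀ s t : V, ∀ p, π' s t = some p →
      p.vtx 0 = s ∧ p.vtx p.len = t ∧ p.len ≤ h)
    (hi : ∀ s t : V,
      (∀ (k : ℕ) (wv : ℕ → V), wv 0 = s → wv k = t → IsWalk E k wv →
        (k : ℕ∞) = bdist E h s t → ∀ i ≤ k, wv i ∉ C ∧ wv i ∉ D) →
      plen (π' s t) = bdist E h s t)
    (hii : ∀ s t : V, ∀ p, π' s t = some p → p.len = h → ∃ i ≤ p.len, p.vtx i ∈ H) :
    ∀ s t : V, s ∉ C → s ∉ D → s ∉ H → gdist E s t ≠ ⊤ →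
      ∃ (k : ℕ) (wv : ℕ → V), wv 0 = s ∧ wv k = t ∧ IsWalk E k wv ∧
        (k : ℕ∞) = gdist E s t ∧
        ((∃ p, π' s t = some p ∧ p.len = k ∧ ∀ i ≤ k, wv i = p.vtx i) ∨
         (∃ m, 1 ≤ m ∧ m ≤ k ∧
           ((∃ r, (r ∈ C ∨ r ∈ D ∨ r ∈ H) ∧
              ∃ p, π' s r = some p ∧ p.len = m ∧ ∀ i ≤ m, wv i = p.vtx i) ∨
            (∃ qv r, (r ∈ C ∨ r ∈ D ∨ r ∈ H) ∧ E qv r ∧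
              ∃ p, π' s qv = some p ∧ p.len + 1 = m ∧
                (∀ i ≤ p.len, wv i = p.vtx i) ∧ wv m = r)))) :=
  prefix_decomposition_general E C D H h π' hπ' hi hii

end Paper
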